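/- arXiv:math/0612842 — 4 statements merged into one kernel-verified Lean document; each statement's English description precedes it below -/
import Mathlib

section
/- Let A be a skew-symmetric 2n×2n matrix over a commutative ring with a_{ij}=0 whenever 1 ≤ i < j ≤ n or n+1 ≤ i < j ≤ 2n, and let B be the n×n matrix with b_{ij} = a_{i,j+n}. If I ⊆ [2n] is a balanced subset of even cardinality, then pf_{I,Ī}(A) = (−1)^{C(|I_1|,2)+C(|Ī_1|,2)} · Δ_{I_1,I_2}(B) · Δ_{Ī_1,Ī_2}(B), where I_1 = I ∩ [n], I_2 = {i−n : i ∈ I ∩ [n+1,2n]}, Ī_1 = Ī ∩ [n], Ī_2 = {i−n : i ∈ Ī ∩ [n+1,2n]}, and C(k,2) = k(k−1)/2. -/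
open scoped Classical
noncomputable section

/-- The crossing number of a matching `π` (pairs written `(i,j)` with `i < j`): the number of
pairs `{i,j}, {k,l}` of `π` with `i < k < j < l`. -/
def crossNum (π : Finset (ℕ × ℕ)) : ℕ :=
  ((π ×ˢ π).filter fun pq => pq.1.1 < pq.2.1 ∧ pq.2.1 < pq.1.2 ∧ pq.1.2 < pq.2.2).card

/-- `π` is a perfect matching of the finite set `I`: a set of pairs `(i,j)`, `i < j`, with all
endpoints in `I`, pairwise disjoint, covering every element of `I`. -/
def IsPM (I : Finset ℕ) (π : Finset (ℕ × ℕ)) : Prop :=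
  (∀ p ∈ π, p.1 ∈ I ∧ p.2 ∈ I ∧ p.1 < p.2) ∧
  (∀ p ∈ π, ∀ q ∈ π, p ≠ q → p.1 ≠ q.1 ∧ p.1 ≠ q.2 ∧ p.2 ≠ q.1 ∧ p.2 ≠ q.2) ∧
  (∀ k ∈ I, ∃ p ∈ π, k = p.1 ∨ k = p.2)

/-- `pf_I(A)`: the Pfaffian of the submatrix of `A` on rows and columns indexed by `I`,
`pf_I(A) = Σ_π ε(π) Π_{(i,j) ∈ π} a_{ij}` over perfect matchings `π` of `I`
(equal to `1` when `I = ∅`). -/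
def pfSub {R : Type*} [CommRing R] (A : ℕ → ℕ → R) (I : Finset ℕ) : R :=
  ∑ π ∈ (I ×ˢ I).powerset.filter (fun π => IsPM I π),
    (-1 : R) ^ crossNum π * ∏ p ∈ π, A p.1 p.2


/-- The minor `Δ_{S,T}(B)` of `B` on the rows indexed by `S` and columns indexed by `T`,
both taken in increasing order (meaningful when `|S| = |T|`). -/
def minor {R : Type*} [CommRing R] (B : ℕ → ℕ → R) (S T : Finset ℕ) : R :=
  Matrix.det (Matrix.of fun i j : Fin S.card =>
    B ((S.sort (· ≤ ·)).getD i 0) ((T.sort (· ≤ ·)).getD j 0))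

/-! Since `A` vanishes inside each of the blocks `[1, n]` and `[n + 1, 2n]`, the only perfect
matchings of a balanced set `J` that contribute to `pf_J(A)` pair each element of
`S = J ∩ [1, n]` with an element of `T = J ∩ [n + 1, 2n]`. Enumerating `S` and `T` increasingly,
these matchings are indexed by the permutations `σ` of `Fin k`, and the weight of the matching
of `σ` is the term of `σ` in the minor of `B`. Its crossings are the pairs `i < j` with
`σ i < σ j`, the complement of the inversions among all `C(k, 2)` pairs, so its sign is
`(-1)^C(k,2) · sign σ`. Thus `pf_J(A) = (-1)^C(k,2) Δ_{S, T - n}(B)`, which applies to `I` and to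
its complement, balanced as well. -/

open Finset Equiv

theorem Equiv.Perm.sign_eq_prod_filter_lt {k : ℕ} (σ : Perm (Fin k)) :
    Perm.sign σ = ∏ p ∈ ({p | p.1 < p.2} : Finset (Fin k × Fin k)),
      if σ p.1 < σ p.2 then 1 else -1 := by
  rw [σ.sign_eq_prod_prod_Ioi, prod_filter, Fintype.prod_prod_type]
  refine prod_congr rfl fun i _ => ?_
  rw [← prod_filter]
  congr 1
  ext j
  simp

theorem Equiv.Perm.neg_one_pow_card_filter_lt_and_lt {k : ℕ} (σ : Perm (Fin k)) :
    (-1 : ℤˣ) ^ #{p : Fin k × Fin k | p.1 < p.2 ∧ σ p.1 < σ p.2} =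
      (-1) ^ k.choose 2 * Perm.sign σ := by
  have hpairs : #{p : Fin k × Fin k | p.1 < p.2} = k.choose 2 := by
    simpa using Fintype.card_product_filter_lt (α := Fin k)
  rw [σ.sign_eq_prod_filter_lt, ← hpairs,
    ← prod_const (s := ({p | p.1 < p.2} : Finset (Fin k × Fin k))), ← prod_mul_distrib]
  simp_rw [mul_ite, mul_one, mul_neg_one, neg_neg]
  rw [prod_ite, prod_const, prod_const_one, mul_one, filter_filter]

section IsPM

variable {J : Finset ℕ} {π : Finset (ℕ × ℕ)}

theorem IsPM.subset_product (hπ : IsPM J π) : π ⊆ J ×ˢ J :=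
  fun p hp => mem_product.2 ⟨(hπ.1 p hp).1, (hπ.1 p hp).2.1⟩

theorem IsPM.eq_of_fst_eq (hπ : IsPM J π) {p q : ℕ × ℕ} (hp : p ∈ π) (hq : q ∈ π)
    (h : p.1 = q.1) : p = q := by
  by_contra hne
  exact (hπ.2.1 p hp q hq hne).1 h

theorem IsPM.eq_of_snd_eq (hπ : IsPM J π) {p q : ℕ × ℕ} (hp : p ∈ π) (hq : q ∈ π)
    (h : p.2 = q.2) : p = q := by
  by_contra hne
  exact (hπ.2.1 p hp q hq hne).2.2.2 h

end IsPM

theorem pfSub_eq_sum_filter {R : Type*} [CommRing R] (A : ℕ → ℕ → R) (J : Finset ℕ)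
    (P : ℕ × ℕ → Prop) [DecidablePred P]
    (hA : ∀ p ∈ J ×ˢ J, p.1 < p.2 → ¬ P p → A p.1 p.2 = 0) :
    pfSub A J = ∑ π ∈ (J ×ˢ J).powerset.filter (fun π => IsPM J π ∧ ∀ p ∈ π, P p),
      (-1 : R) ^ crossNum π * ∏ p ∈ π, A p.1 p.2 := by
  rw [pfSub, ← filter_filter]
  refine (sum_filter_of_ne fun π hπ hne p hp => ?_).symm
  by_contra hnP
  have hπ : IsPM J π := (mem_filter.1 hπ).2
  exact hne (by rw [prod_eq_zero hp (hA p (hπ.subset_product hp) (hπ.1 p hp).2.2 hnP), mul_zero])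

def transversalMatching {k : ℕ} (s t : Fin k → ℕ) (σ : Perm (Fin k)) : Finset (ℕ × ℕ) :=
  univ.image fun i => (s i, t (σ i))

section TransversalMatching

variable {k : ℕ} {s t : Fin k ↪o ℕ}

theorem mem_transversalMatching {σ : Perm (Fin k)} {p : ℕ × ℕ} :
    p ∈ transversalMatching s t σ ↔ ∃ i, (s i, t (σ i)) = p := by
  simp [transversalMatching]

theorem transversalMatching_injective : Function.Injective (transversalMatching s t) := by
  intro σ τ h
  ext i : 1
  have hi : (s i, t (σ i)) ∈ transversalMatching s t τ := h ▸ mem_transversalMatching.2 ⟨i, rfl⟩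
  obtain ⟨j, hj⟩ := mem_transversalMatching.1 hi
  simp only [Prod.mk.injEq, s.eq_iff_eq, t.eq_iff_eq] at hj
  obtain ⟨rfl, hστ⟩ := hj
  exact hστ.symm

theorem prod_transversalMatching {R : Type*} [CommRing R] (A : ℕ → ℕ → R) (σ : Perm (Fin k)) :
    ∏ p ∈ transversalMatching s t σ, A p.1 p.2 = ∏ i, A (s i) (t (σ i)) :=
  prod_image fun _ _ _ _ h => s.injective (congrArg Prod.fst h)

variable (hst : ∀ i j, s i < t j)
include hst

theorem isPM_transversalMatching (σ : Perm (Fin k)) :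
    IsPM (univ.image s ∪ univ.image t) (transversalMatching s t σ) := by
  refine ⟨?_, ?_, ?_⟩
  · rintro _ hp
    obtain ⟨i, rfl⟩ := mem_transversalMatching.1 hp
    simp [hst]
  · rintro _ hp _ hq hpq
    obtain ⟨i, rfl⟩ := mem_transversalMatching.1 hp
    obtain ⟨j, rfl⟩ := mem_transversalMatching.1 hq
    have hij : i ≠ j := by rintro rfl; exact hpq rfl
    exact ⟨by simpa using hij, (hst i (σ j)).ne, (hst j (σ i)).ne', by simpa using hij⟩
  · intro x hx
    rcases mem_union.1 hx with hx | hx <;> obtain ⟨i, -, rfl⟩ := mem_image.1 hx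
    · exact ⟨_, mem_transversalMatching.2 ⟨i, rfl⟩, Or.inl rfl⟩
    · exact ⟨_, mem_transversalMatching.2 ⟨σ.symm i, rfl⟩, Or.inr (by simp)⟩

theorem exists_transversalMatching_eq {π : Finset (ℕ × ℕ)}
    (hπ : IsPM (univ.image s ∪ univ.image t) π)
    (htr : ∀ p ∈ π, p.1 ∈ univ.image s ∧ p.2 ∈ univ.image t) :
    ∃ σ, transversalMatching s t σ = π := by
  have partner : ∀ i, ∃ j, (s i, t j) ∈ π := by
    intro i
    obtain ⟨p, hp, h | h⟩ := hπ.2.2 (s i) (by simp)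
    · obtain ⟨j, -, hj⟩ := mem_image.1 (htr p hp).2
      exact ⟨j, by rw [h, hj]; exact hp⟩
    · obtain ⟨j, -, hj⟩ := mem_image.1 (htr p hp).2
      exact absurd (hst i j) (by rw [hj, ← h]; exact lt_irrefl _)
  choose f hf using partner
  have hinj : Function.Injective f := fun i i' h =>
    s.injective (congrArg Prod.fst (hπ.eq_of_snd_eq (hf i) (hf i') (by simp [h])))
  refine ⟨Equiv.ofBijective f (Finite.injective_iff_bijective.1 hinj), ?_⟩
  ext p
  refine ⟨fun hp => ?_, fun hp => ?_⟩
  · obtain ⟨i, rfl⟩ := mem_transversalMatching.1 hp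
    exact hf i
  · obtain ⟨i, -, hi⟩ := mem_image.1 (htr p hp).1
    exact mem_transversalMatching.2 ⟨i, hπ.eq_of_fst_eq (hf i) hp hi⟩

theorem crossNum_transversalMatching (σ : Perm (Fin k)) :
    crossNum (transversalMatching s t σ) = #{p : Fin k × Fin k | p.1 < p.2 ∧ σ p.1 < σ p.2} := by
  set g : Fin k → ℕ × ℕ := fun i => (s i, t (σ i))
  have hg : Function.Injective g := fun i j h => s.injective (congrArg Prod.fst h)
  rw [crossNum, transversalMatching, ← prodMap_image_product, filter_image,
    card_image_of_injective _ (hg.prodMap hg), univ_product_univ]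
  congr 1
  ext p
  simp [hst]

theorem sum_transversal_eq_det {R : Type*} [CommRing R] (A : ℕ → ℕ → R) :
    ∑ π ∈ ((univ.image s ∪ univ.image t) ×ˢ (univ.image s ∪ univ.image t)).powerset.filter
        (fun π => IsPM (univ.image s ∪ univ.image t) π ∧
          ∀ p ∈ π, p.1 ∈ univ.image s ∧ p.2 ∈ univ.image t),
      (-1 : R) ^ crossNum π * ∏ p ∈ π, A p.1 p.2 =
      (-1) ^ k.choose 2 * (Matrix.of fun i j => A (s i) (t j)).det := by
  have hset : ((univ.image s ∪ univ.image t) ×ˢ (univ.image s ∪ univ.image t)).powerset.filter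
        (fun π => IsPM (univ.image s ∪ univ.image t) π ∧
          ∀ p ∈ π, p.1 ∈ univ.image s ∧ p.2 ∈ univ.image t) =
      univ.image (transversalMatching s t) := by
    ext π
    rw [mem_filter, mem_powerset]
    constructor
    · rintro ⟨-, hπ, htr⟩
      obtain ⟨σ, rfl⟩ := exists_transversalMatching_eq hst hπ htr
      exact mem_image_of_mem _ (mem_univ σ)
    · intro h
      obtain ⟨σ, -, rfl⟩ := mem_image.1 h
      have hπ := isPM_transversalMatching hst σ
      refine ⟨hπ.subset_product, hπ, fun p hp => ?_⟩
      obtain ⟨i, rfl⟩ := mem_transversalMatching.1 hp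
      simp
  rw [hset, sum_image fun σ _ τ _ h => transversalMatching_injective h, ← Matrix.det_transpose,
    Matrix.det_apply', mul_sum]
  refine sum_congr rfl fun σ _ => ?_
  have hsign := congrArg (fun u : ℤˣ => ((u : ℤ) : R)) σ.neg_one_pow_card_filter_lt_and_lt
  push_cast at hsign
  rw [crossNum_transversalMatching hst, prod_transversalMatching, hsign, mul_assoc]
  rfl

end TransversalMatching

theorem pfSub_union_eq_det {R : Type*} [CommRing R] (A : ℕ → ℕ → R) {S T : Finset ℕ} {k : ℕ}
    (hS : #S = k) (hT : #T = k) (hST : ∀ a ∈ S, ∀ b ∈ T, a < b)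
    (hAS : ∀ a ∈ S, ∀ b ∈ S, a < b → A a b = 0) (hAT : ∀ a ∈ T, ∀ b ∈ T, a < b → A a b = 0) :
    pfSub A (S ∪ T) = (-1) ^ k.choose 2 *
      (Matrix.of fun i j => A (S.orderEmbOfFin hS i) (T.orderEmbOfFin hT j)).det := by
  have hst : ∀ i j, S.orderEmbOfFin hS i < T.orderEmbOfFin hT j := fun i j =>
    hST _ (orderEmbOfFin_mem S hS i) _ (orderEmbOfFin_mem T hT j)
  rw [← sum_transversal_eq_det hst A, image_orderEmbOfFin_univ, image_orderEmbOfFin_univ]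
  refine pfSub_eq_sum_filter A _ (fun p => p.1 ∈ S ∧ p.2 ∈ T) fun p hp hlt htr => ?_
  obtain ⟨hp1, hp2⟩ := mem_product.1 hp
  rcases mem_union.1 hp1 with h1 | h1 <;> rcases mem_union.1 hp2 with h2 | h2
  · exact hAS _ h1 _ h2 hlt
  · exact absurd ⟨h1, h2⟩ htr
  · exact absurd (hST _ h2 _ h1) hlt.not_gt
  · exact hAT _ h1 _ h2 hlt

theorem minor_eq_det_orderEmbOfFin {R : Type*} [CommRing R] (B : ℕ → ℕ → R) (S T : Finset ℕ)
    (h : #T = #S) :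
    minor B S T = (Matrix.of fun i j => B (S.orderEmbOfFin rfl i) (T.orderEmbOfFin h j)).det := by
  simp only [minor, orderEmbOfFin_apply]
  congr; ext
  rw [List.getD_eq_getElem _ _ (by simp), List.getD_eq_getElem _ _ (by simp [h])]
  rfl

theorem Finset.orderEmbOfFin_image {α β : Type*} [LinearOrder α] [LinearOrder β] [DecidableEq β]
    {T : Finset α} {f : α → β} (hf : StrictMonoOn f T) {k : ℕ} (hT : #T = k)
    (h : #(T.image f) = k) (i : Fin k) :
    (T.image f).orderEmbOfFin h i = f (T.orderEmbOfFin hT i) := by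
  refine (congrFun (orderEmbOfFin_unique h (f := f ∘ T.orderEmbOfFin hT) ?_ ?_) i).symm
  · exact fun j => mem_image_of_mem f (orderEmbOfFin_mem T hT j)
  · exact fun i j hij => hf (orderEmbOfFin_mem T hT i) (orderEmbOfFin_mem T hT j)
      ((T.orderEmbOfFin hT).strictMono hij)

def IsBalanced (n : ℕ) (I : Finset ℕ) : Prop := #{i ∈ I | i ≤ n} * 2 = #I

theorem IsBalanced.sdiff {n : ℕ} {I : Finset ℕ} (hI : I ⊆ Icc 1 (2 * n)) (h : IsBalanced n I) :
    IsBalanced n (Icc 1 (2 * n) \ I) := by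
  have hlow : {i ∈ Icc 1 (2 * n) | i ≤ n} = Icc 1 n := by
    ext i; simp only [mem_filter, mem_Icc]; omega
  have hsub : {i ∈ I | i ≤ n} ⊆ Icc 1 n := hlow ▸ filter_subset_filter _ hI
  have hdiff : {i ∈ Icc 1 (2 * n) \ I | i ≤ n} = Icc 1 n \ {i ∈ I | i ≤ n} := by
    rw [← hlow]; ext i; simp only [mem_filter, mem_sdiff]; tauto
  have hIcard := card_le_card hI
  have hlowcard := card_le_card hsub
  simp only [Nat.card_Icc] at hIcard hlowcard
  unfold IsBalanced at h
  rw [IsBalanced, hdiff, card_sdiff_of_subset hsub, card_sdiff_of_subset hI,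
    Nat.card_Icc, Nat.card_Icc]
  omega

theorem pfSub_eq_minor {R : Type*} [CommRing R] (n : ℕ) (A : ℕ → ℕ → R)
    (hzero1 : ∀ i j, 1 ≤ i → i < j → j ≤ n → A i j = 0)
    (hzero2 : ∀ i j, n + 1 ≤ i → i < j → j ≤ 2 * n → A i j = 0)
    (B : ℕ → ℕ → R) (hB : ∀ i j, B i j = A i (j + n))
    {J : Finset ℕ} (hJ : J ⊆ Icc 1 (2 * n)) (hbal : IsBalanced n J) :
    pfSub A J = (-1) ^ (#{i ∈ J | i ≤ n}).choose 2 *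
      minor B {i ∈ J | i ≤ n} ({i ∈ J | n < i}.image (· - n)) := by
  set S := {i ∈ J | i ≤ n}
  set T := {i ∈ J | n < i}
  have hJST : S ∪ T = J := by
    rw [← filter_or, filter_true_of_mem fun i _ => le_or_gt i n]
  have hdisj : Disjoint S T := disjoint_filter.2 fun i _ h => by omega
  have hT : #T = #S := by
    have hbal' : #S * 2 = #J := hbal
    have := card_union_of_disjoint hdisj
    rw [hJST] at this
    omega
  have hsub : StrictMonoOn (· - n) T := fun a ha b _ hab => by
    have := (mem_filter.1 ha).2
    show a - n < b - n
    omega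
  have hTn : #(T.image (· - n)) = #S := by rw [card_image_of_injOn hsub.injOn, hT]
  rw [minor_eq_det_orderEmbOfFin _ _ _ hTn]
  conv_lhs => rw [← hJST]
  rw [pfSub_union_eq_det A rfl hT]
  · congr; ext i j
    rw [orderEmbOfFin_image hsub hT, hB,
      Nat.sub_add_cancel (mem_filter.1 (orderEmbOfFin_mem T hT j)).2.le]
  · exact fun a ha b hb => by simp only [S, T, mem_filter] at ha hb; omega
  · exact fun a ha b hb hab => hzero1 a b (mem_Icc.1 (hJ (mem_filter.1 ha).1)).1 hab
      (mem_filter.1 hb).2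
  · exact fun a ha b hb hab => hzero2 a b (mem_filter.1 ha).2 hab
      (mem_Icc.1 (hJ (mem_filter.1 hb).1)).2

theorem pfPair_eq_minors_general {R : Type*} [CommRing R] (n : ℕ) (A : ℕ → ℕ → R)
    (hzero1 : ∀ i j, 1 ≤ i → i < j → j ≤ n → A i j = 0)
    (hzero2 : ∀ i j, n + 1 ≤ i → i < j → j ≤ 2 * n → A i j = 0)
    (B : ℕ → ℕ → R) (hB : ∀ i j, B i j = A i (j + n))
    (I : Finset ℕ) (hI : I ⊆ Finset.Icc 1 (2 * n))
    (hbal : (I.filter (fun i => i ≤ n)).card * 2 = I.card) :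
    pfSub A I * pfSub A (Finset.Icc 1 (2 * n) \ I) =
      (-1 : R) ^ (Nat.choose (I.filter (fun i => i ≤ n)).card 2 +
          Nat.choose ((Finset.Icc 1 (2 * n) \ I).filter (fun i => i ≤ n)).card 2) *
        minor B (I.filter (fun i => i ≤ n))
          ((I.filter (fun i => n < i)).image (fun i => i - n)) *
        minor B ((Finset.Icc 1 (2 * n) \ I).filter (fun i => i ≤ n))
          (((Finset.Icc 1 (2 * n) \ I).filter (fun i => n < i)).image (fun i => i - n)) := by
  rw [pfSub_eq_minor n A hzero1 hzero2 B hB hI hbal,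
    pfSub_eq_minor n A hzero1 hzero2 B hB sdiff_subset (IsBalanced.sdiff hI hbal), pow_add]
  ring

/-- For a skew-symmetric `2n × 2n` matrix `A` vanishing on `1 ≤ i < j ≤ n` and on
`n+1 ≤ i < j ≤ 2n`, with `B` the `n × n` matrix `b_{ij} = a_{i,j+n}`, and `I ⊆ [2n]` balanced
of even cardinality:
`pf_{I,Ī}(A) = (−1)^{C(|I₁|,2)+C(|Ī₁|,2)} Δ_{I₁,I₂}(B) Δ_{Ī₁,Ī₂}(B)`,
where `I₁ = I ∩ [n]`, `I₂ = {i−n : i ∈ I ∩ [n+1,2n]}` and similarly for `Ī = [2n] ∖ I`. -/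
theorem pfPair_eq_minors {R : Type*} [CommRing R] (n : ℕ) (A : ℕ → ℕ → R)
    (hskew : ∀ i j, A i j = -A j i)
    (hzero1 : ∀ i j, 1 ≤ i → i < j → j ≤ n → A i j = 0)
    (hzero2 : ∀ i j, n + 1 ≤ i → i < j → j ≤ 2 * n → A i j = 0)
    (B : ℕ → ℕ → R) (hB : ∀ i j, B i j = A i (j + n))
    (I : Finset ℕ) (hI : I ⊆ Finset.Icc 1 (2 * n)) (heven : Even I.card)
    (hbal : (I.filter (fun i => i ≤ n)).card * 2 = I.card) :
    pfSub A I * pfSub A (Finset.Icc 1 (2 * n) \ I) =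
      (-1 : R) ^ (Nat.choose (I.filter (fun i => i ≤ n)).card 2 +
          Nat.choose ((Finset.Icc 1 (2 * n) \ I).filter (fun i => i ≤ n)).card 2) *
        minor B (I.filter (fun i => i ≤ n))
          ((I.filter (fun i => n < i)).image (fun i => i - n)) *
        minor B ((Finset.Icc 1 (2 * n) \ I).filter (fun i => i ≤ n))
          (((Finset.Icc 1 (2 * n) \ I).filter (fun i => n < i)).image (fun i => i - n)) :=
  pfPair_eq_minors_general n A hzero1 hzero2 B hB I hI hbal
end
end

section
/- Let I ⊆ [2n] be a subset of even cardinality with |I| ≥ n. Then every I-compatible diagram is min(I,Ī)-compatible; that is, D(I) ⊆ D(min(I,Ī)). -/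
/-!
Write `I = {i_1 < i_2 < ⋯}` and `Ī = {j_1 < j_2 < ⋯}`. An element of `I` lies in `min(I,Ī)` iff
at most as many elements of `Ī` as of `I` precede it, and symmetrically for an element of `Ī`.
The vertices strictly inside an arc `(a,b)` of a diagram are matched among themselves, so for an
`I`-compatible diagram they contain equally many elements of `I` and of `Ī`. Hence the difference
"elements of `I` before `x`" minus "elements of `Ī` before `x`" changes by exactly `±1` from `a` to
`b`, and exactly one endpoint of the arc satisfies its membership criterion for `min(I,Ī)`.
-/

open scoped Classical
noncomputable section

def IsTL (n : ℕ) (D : Finset (ℕ × ℕ)) : Prop :=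
  (∀ p ∈ D, 1 ≤ p.1 ∧ p.1 < p.2 ∧ p.2 ≤ 2 * n) ∧
  (∀ p ∈ D, ∀ q ∈ D, p ≠ q → p.1 ≠ q.1 ∧ p.1 ≠ q.2 ∧ p.2 ≠ q.1 ∧ p.2 ≠ q.2) ∧
  (∀ p ∈ D, ∀ q ∈ D, ¬(p.1 < q.1 ∧ q.1 < p.2 ∧ p.2 < q.2)) ∧
  (∀ p ∈ D, ∀ k, p.1 < k → k < p.2 → ∃ q ∈ D, k = q.1 ∨ k = q.2)

def Compat (I : Finset ℕ) (D : Finset (ℕ × ℕ)) : Prop :=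
  ∀ p ∈ D, (p.1 ∈ I ∧ p.2 ∉ I) ∨ (p.1 ∉ I ∧ p.2 ∈ I)

def minSet (n : ℕ) (I : Finset ℕ) : Finset ℕ :=
  (Finset.range I.card).image fun t =>
    if t < (Finset.Icc 1 (2 * n) \ I).card then
      min ((I.sort (· ≤ ·)).getD t 0) (((Finset.Icc 1 (2 * n) \ I).sort (· ≤ ·)).getD t 0)
    else (I.sort (· ≤ ·)).getD t 0

open Finset

namespace Nat

theorem count_le_count_iff {p : ℕ → Prop} [DecidablePred p] {a b : ℕ} (hb : p b) :
    count p a ≤ count p b ↔ a ≤ b :=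
  ⟨fun h => not_lt.1 fun hba => (count_strict_mono hb hba).not_ge h, fun h => count_monotone p h⟩

theorem count_eq_count_add_card_filter_Ioo {p : ℕ → Prop} [DecidablePred p] {a b : ℕ}
    (hab : a < b) : count p b = count p a + (if p a then 1 else 0) + #{x ∈ Ioo a b | p x} := by
  rw [← count_succ, count_eq_card_filter_range, count_eq_card_filter_range, range_eq_Ico,
    range_eq_Ico, ← Ico_union_Ico_eq_Ico (zero_le _) (show a + 1 ≤ b from hab), filter_union,
    card_union_of_disjoint (disjoint_filter_filter (Ico_disjoint_Ico_consecutive _ _ _)),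
    Ico_add_one_left_eq_Ioo]

end Nat

namespace Finset

variable (S : Finset ℕ) {t x : ℕ}

theorem sort_getD_eq_nth : (S.sort (· ≤ ·)).getD t 0 = Nat.nth (· ∈ S) t := by
  rw [Nat.nth_eq_getD_sort (p := (· ∈ S)) S.finite_toSet, finite_toSet_toFinset]

theorem nth_mem_of_lt_card (ht : t < #S) : Nat.nth (· ∈ S) t ∈ S :=
  Nat.nth_mem_of_lt_card S.finite_toSet (by simpa using ht)

theorem count_nth_of_lt_card (ht : t < #S) : Nat.count (· ∈ S) (Nat.nth (· ∈ S) t) = t :=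
  Nat.count_nth_of_lt_card_finite S.finite_toSet (by simpa using ht)

theorem count_le_card : Nat.count (· ∈ S) x ≤ #S := by
  simpa using Nat.count_le_card S.finite_toSet x

theorem count_lt_card (hx : x ∈ S) : Nat.count (· ∈ S) x < #S := by
  simpa using Nat.count_lt_card S.finite_toSet hx

end Finset

def sortedMin (I J : Finset ℕ) : Finset ℕ :=
  (range #I).image fun t =>
    if t < #J then min (Nat.nth (· ∈ I) t) (Nat.nth (· ∈ J) t) else Nat.nth (· ∈ I) t

theorem minSet_eq_sortedMin (n : ℕ) (I : Finset ℕ) :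
    minSet n I = sortedMin I (Icc 1 (2 * n) \ I) := by
  simp only [minSet, sortedMin, sort_getD_eq_nth]

section sortedMin

variable {I J : Finset ℕ} {x : ℕ}

theorem mem_sortedMin_iff_of_mem_left (hIJ : Disjoint I J) (hx : x ∈ I) :
    x ∈ sortedMin I J ↔ Nat.count (· ∈ J) x ≤ Nat.count (· ∈ I) x := by
  constructor
  · simp only [sortedMin, mem_image, mem_range]
    rintro ⟨t, htI, hxt⟩
    split_ifs at hxt with htJ
    · have hb := nth_mem_of_lt_card J htJ
      rcases min_choice (Nat.nth (· ∈ I) t) (Nat.nth (· ∈ J) t) with hmin | hmin <;>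
        rw [hmin] at hxt <;> subst hxt
      · rw [count_nth_of_lt_card I htI]
        exact (Nat.count_monotone _ (hmin ▸ min_le_right _ _)).trans_eq
          (count_nth_of_lt_card J htJ)
      · exact absurd hb (disjoint_left.1 hIJ hx)
    · rw [← hxt, count_nth_of_lt_card I htI]
      exact (count_le_card J).trans (not_lt.1 htJ)
  · intro hle
    refine mem_image.2 ⟨Nat.count (· ∈ I) x, mem_range.2 (count_lt_card I hx), ?_⟩
    split_ifs with htJ
    · rw [Nat.nth_count hx, min_eq_left]
      rwa [← Nat.count_le_count_iff (nth_mem_of_lt_card J htJ), count_nth_of_lt_card J htJ]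
    · exact Nat.nth_count hx

theorem mem_sortedMin_iff_of_mem_right (hIJ : Disjoint I J) (hJI : #J ≤ #I) (hx : x ∈ J) :
    x ∈ sortedMin I J ↔ Nat.count (· ∈ I) x ≤ Nat.count (· ∈ J) x := by
  constructor
  · simp only [sortedMin, mem_image, mem_range]
    rintro ⟨t, htI, hxt⟩
    have ha := nth_mem_of_lt_card I htI
    split_ifs at hxt with htJ
    · rcases min_choice (Nat.nth (· ∈ I) t) (Nat.nth (· ∈ J) t) with hmin | hmin <;>
        rw [hmin] at hxt <;> subst hxt
      · exact absurd hx (disjoint_left.1 hIJ ha)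
      · rw [count_nth_of_lt_card J htJ]
        exact (Nat.count_monotone _ (hmin ▸ min_le_left _ _)).trans_eq
          (count_nth_of_lt_card I htI)
    · exact absurd (hxt ▸ ha) (disjoint_right.1 hIJ hx)
  · intro hle
    have htJ := count_lt_card J hx
    refine mem_image.2 ⟨Nat.count (· ∈ J) x, mem_range.2 (htJ.trans_le hJI), ?_⟩
    rw [if_pos htJ, Nat.nth_count hx, min_eq_right]
    rwa [← Nat.count_le_count_iff (nth_mem_of_lt_card I (htJ.trans_le hJI)),
      count_nth_of_lt_card I (htJ.trans_le hJI)]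

end sortedMin

def vertices {α : Type*} [DecidableEq α] (E : Finset (α × α)) : Finset α :=
  E.biUnion fun q => {q.1, q.2}

theorem card_filter_vertices {α : Type*} [DecidableEq α] {E : Finset (α × α)} {P : α → Prop}
    [DecidablePred P] (hE : (E : Set (α × α)).PairwiseDisjoint fun q => ({q.1, q.2} : Finset α))
    (hP : ∀ q ∈ E, (P q.1 ∧ ¬P q.2) ∨ (¬P q.1 ∧ P q.2)) :
    #{x ∈ vertices E | P x} = #E := by
  have hone : ∀ q ∈ E, #{x ∈ ({q.1, q.2} : Finset α) | P x} = 1 := by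
    intro q hq
    rcases hP q hq with ⟨h1, h2⟩ | ⟨h1, h2⟩ <;> simp [filter_insert, filter_singleton, h1, h2]
  rw [vertices, filter_biUnion, card_biUnion (hE.mono fun q => filter_subset P _),
    sum_const_nat hone, mul_one]

namespace IsTL

variable {n : ℕ} {D : Finset (ℕ × ℕ)} {p : ℕ × ℕ}

theorem pairwiseDisjoint (hD : IsTL n D) :
    (D : Set (ℕ × ℕ)).PairwiseDisjoint fun q => ({q.1, q.2} : Finset ℕ) := by
  intro p hp q hq hpq
  have := hD.2.1 p hp q hq hpq
  simp only [Function.onFun, disjoint_insert_left, disjoint_insert_right, disjoint_singleton,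
    mem_insert, mem_singleton]
  tauto

theorem Ioo_eq_vertices (hD : IsTL n D) (hp : p ∈ D) :
    Ioo p.1 p.2 = vertices {q ∈ D | p.1 < q.1 ∧ q.2 < p.2} := by
  ext x
  simp only [vertices, mem_Ioo, mem_biUnion, mem_filter, mem_insert, mem_singleton]
  constructor
  · rintro ⟨h1, h2⟩
    obtain ⟨q, hq, hxq⟩ := hD.2.2.2 p hp x h1 h2
    have hq' := hD.1 q hq
    have hqp : q ≠ p := by rintro rfl; omega
    have := hD.2.1 p hp q hq hqp.symm
    have := hD.2.2.1 p hp q hq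
    have := hD.2.2.1 q hq p hp
    exact ⟨q, ⟨hq, by omega⟩, hxq⟩
  · rintro ⟨q, ⟨hq, h1, h2⟩, rfl | rfl⟩ <;> have := (hD.1 q hq).2.1 <;> omega

theorem card_filter_Ioo_eq (hD : IsTL n D) {I : Finset ℕ} (hc : Compat I D) (hp : p ∈ D) :
    #{x ∈ Ioo p.1 p.2 | x ∈ I} = #{x ∈ Ioo p.1 p.2 | x ∈ Icc 1 (2 * n) \ I} := by
  set E := {q ∈ D | p.1 < q.1 ∧ q.2 < p.2}
  have hED : ∀ q ∈ E, q ∈ D := fun q hq => (mem_filter.1 hq).1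
  have hE : (E : Set (ℕ × ℕ)).PairwiseDisjoint fun q => ({q.1, q.2} : Finset ℕ) :=
    hD.pairwiseDisjoint.subset (coe_subset.2 (filter_subset _ _))
  rw [hD.Ioo_eq_vertices hp, card_filter_vertices hE fun q hq => hc q (hED q hq),
    card_filter_vertices hE]
  intro q hq
  obtain ⟨h1, h12, h2⟩ := hD.1 q (hED q hq)
  have hq1 : q.1 ∈ Icc 1 (2 * n) := mem_Icc.2 ⟨h1, by omega⟩
  have hq2 : q.2 ∈ Icc 1 (2 * n) := mem_Icc.2 ⟨by omega, h2⟩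
  simp only [mem_sdiff, hq1, hq2, true_and, not_not]
  exact (hc q (hED q hq)).symm

end IsTL

theorem compat_minSet_general (n : ℕ) (I : Finset ℕ) (hI : I ⊆ Finset.Icc 1 (2 * n))
    (hbig : n ≤ I.card) (D : Finset (ℕ × ℕ)) (hD : IsTL n D)
    (hc : Compat I D) : Compat (minSet n I) D := by
  set J := Icc 1 (2 * n) \ I
  have hIJ : Disjoint I J := disjoint_sdiff
  have hJI : #J ≤ #I := by rw [card_sdiff_of_subset hI, Nat.card_Icc]; omega
  intro p hp
  obtain ⟨hp1, hp12, hp2⟩ := hD.1 p hp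
  have hbal : #{x ∈ Ioo p.1 p.2 | x ∈ I} = #{x ∈ Ioo p.1 p.2 | x ∈ J} :=
    hD.card_filter_Ioo_eq hc hp
  have hcountI := Nat.count_eq_count_add_card_filter_Ioo (p := (· ∈ I)) hp12
  have hcountJ := Nat.count_eq_count_add_card_filter_Ioo (p := (· ∈ J)) hp12
  rw [minSet_eq_sortedMin]
  rcases hc p hp with ⟨h1, h2⟩ | ⟨h1, h2⟩
  · have h1' : p.1 ∉ J := disjoint_left.1 hIJ h1
    have h2' : p.2 ∈ J := mem_sdiff.2 ⟨mem_Icc.2 ⟨by omega, hp2⟩, h2⟩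
    rw [mem_sortedMin_iff_of_mem_left hIJ h1, mem_sortedMin_iff_of_mem_right hIJ hJI h2']
    simp only [h1, h1', if_true, if_false] at hcountI hcountJ
    omega
  · have h1' : p.1 ∈ J := mem_sdiff.2 ⟨mem_Icc.2 ⟨hp1, by omega⟩, h1⟩
    have h2' : p.2 ∉ J := disjoint_left.1 hIJ h2
    rw [mem_sortedMin_iff_of_mem_right hIJ hJI h1', mem_sortedMin_iff_of_mem_left hIJ h2]
    simp only [h1, h1', if_true, if_false] at hcountI hcountJ
    omega

/-- For `I ⊆ [2n]` of even cardinality with `|I| ≥ n`, every `I`-compatible diagram is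
`min(I,Ī)`-compatible. -/
theorem compat_minSet (n : ℕ) (I : Finset ℕ) (hI : I ⊆ Finset.Icc 1 (2 * n))
    (heven : Even I.card) (hbig : n ≤ I.card) (D : Finset (ℕ × ℕ)) (hD : IsTL n D)
    (hc : Compat I D) : Compat (minSet n I) D :=
  compat_minSet_general n I hI hbig D hD hc
end
end

section
/- Let I ⊆ [2n], let D ∈ T_n be I-compatible, and let (i,j) ∈ D with i < j. Then the number of elements of I strictly between i and j equals the number of elements of Ī = [2n]∖I strictly between i and j; that is, |{k : i<k<j} ∩ I| = |{k : i<k<j} ∩ Ī|. -/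
open scoped Classical

/-- If `D ∈ T_n` is `I`-compatible and `(i,j) ∈ D` with `i < j`, then the number of elements
of `I` strictly between `i` and `j` equals the number of elements of `Ī = [2n] ∖ I` strictly
between `i` and `j`. -/
theorem between_balance (n : ℕ) (D : Finset (ℕ × ℕ)) (hD : IsTL n D) (I : Finset ℕ)
    (hI : I ⊆ Finset.Icc 1 (2 * n)) (hc : Compat I D) (i j : ℕ) (hij : (i, j) ∈ D)
    (hlt : i < j) :
    (Finset.Ioo i j ∩ I).card = (Finset.Ioo i j ∩ (Finset.Icc 1 (2 * n) \ I)).card := by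
  obtain ⟨hb, hdisj, hnc, hcov⟩ := hD
  -- uniqueness of the pair containing a vertex
  have huniq : ∀ q ∈ D, ∀ q' ∈ D, ∀ x : ℕ, (x = q.1 ∨ x = q.2) → (x = q'.1 ∨ x = q'.2) →
      q = q' := by
    intro q hq q' hq' x h1 h2
    by_contra hne
    obtain ⟨a, b, c, d⟩ := hdisj q hq q' hq' hne
    rcases h1 with rfl | rfl <;> rcases h2 with h | h <;> simp_all
  -- both endpoints of a pair meeting Ioo i j lie in Ioo i j
  have key : ∀ q ∈ D, ∀ k : ℕ, i < k → k < j → (k = q.1 ∨ k = q.2) →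
      q.1 ∈ Finset.Ioo i j ∧ q.2 ∈ Finset.Ioo i j := by
    intro q hq k hik hkj hkq
    have hqne : q ≠ (i, j) := by
      rintro rfl
      rcases hkq with rfl | rfl <;> omega
    obtain ⟨a, b, c, d⟩ := hdisj q hq (i, j) hij hqne
    have hq12 := (hb q hq).2.1
    rcases hkq with rfl | rfl
    · have h2 : q.2 < j := by
        by_contra h
        exact hnc (i, j) hij q hq ⟨hik, hkj, by omega⟩
      simp only [Finset.mem_Ioo]; omega
    · have h1 : i < q.1 := by
        by_contra h
        exact hnc q hq (i, j) hij ⟨by omega, by omega, hkj⟩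
      simp only [Finset.mem_Ioo]; omega
  -- the partner function
  classical
  set f : ℕ → ℕ := fun k =>
    if h : ∃ q ∈ D, k = q.1 ∨ k = q.2 then
      (if k = h.choose.1 then h.choose.2 else h.choose.1) else 0 with hf
  have hpf : ∀ q ∈ D, f q.1 = q.2 ∧ f q.2 = q.1 := by
    intro q hq
    have hq12 := (hb q hq).2.1
    constructor
    · have hex : ∃ q' ∈ D, q.1 = q'.1 ∨ q.1 = q'.2 := ⟨q, hq, Or.inl rfl⟩
      obtain ⟨hmem, hor⟩ := hex.choose_spec
      have := huniq q hq hex.choose hmem q.1 (Or.inl rfl) hor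
      simp only [hf, dif_pos hex, ← this]
      simp
    · have hex : ∃ q' ∈ D, q.2 = q'.1 ∨ q.2 = q'.2 := ⟨q, hq, Or.inr rfl⟩
      obtain ⟨hmem, hor⟩ := hex.choose_spec
      have := huniq q hq hex.choose hmem q.2 (Or.inr rfl) hor
      have hne : q.2 ≠ q.1 := by omega
      simp only [hf, dif_pos hex, ← this]
      simp [hne]
  refine Finset.card_bij (fun k _ => f k) ?_ ?_ ?_
  · intro k hk
    rw [Finset.mem_inter] at hk
    obtain ⟨hkIoo, hkI⟩ := hk
    rw [Finset.mem_Ioo] at hkIoo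
    obtain ⟨q, hq, hor⟩ := hcov (i, j) hij k hkIoo.1 hkIoo.2
    obtain ⟨h1, h2⟩ := key q hq k hkIoo.1 hkIoo.2 hor
    have hbq := hb q hq
    have hcomp := hc q hq
    rcases hor with rfl | rfl
    · have : f q.1 = q.2 := (hpf q hq).1
      show f q.1 ∈ _
      rw [this]
      rcases hcomp with ⟨_, h2I⟩ | ⟨h1I, _⟩
      · simp only [Finset.mem_inter, Finset.mem_sdiff, Finset.mem_Icc]
        exact ⟨h2, ⟨by omega, hbq.2.2⟩, h2I⟩
      · exact absurd hkI h1I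
    · have : f q.2 = q.1 := (hpf q hq).2
      show f q.2 ∈ _
      rw [this]
      rcases hcomp with ⟨_, h2I⟩ | ⟨h1I, _⟩
      · exact absurd hkI h2I
      · simp only [Finset.mem_inter, Finset.mem_sdiff, Finset.mem_Icc]
        exact ⟨h1, ⟨hbq.1, by omega⟩, h1I⟩
  · intro k1 hk1 k2 hk2 heq
    rw [Finset.mem_inter, Finset.mem_Ioo] at hk1 hk2
    have heq' : f k1 = f k2 := heq
    obtain ⟨q1, hq1, hor1⟩ := hcov (i, j) hij k1 hk1.1.1 hk1.1.2
    obtain ⟨q2, hq2, hor2⟩ := hcov (i, j) hij k2 hk2.1.1 hk2.1.2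
    have h12 := (hb q1 hq1).2.1
    have h22 := (hb q2 hq2).2.1
    have hf1 : (k1 = q1.1 ∧ f k1 = q1.2) ∨ (k1 = q1.2 ∧ f k1 = q1.1) := by
      rcases hor1 with rfl | rfl
      · exact Or.inl ⟨rfl, (hpf q1 hq1).1⟩
      · exact Or.inr ⟨rfl, (hpf q1 hq1).2⟩
    have hf2 : (k2 = q2.1 ∧ f k2 = q2.2) ∨ (k2 = q2.2 ∧ f k2 = q2.1) := by
      rcases hor2 with rfl | rfl
      · exact Or.inl ⟨rfl, (hpf q2 hq2).1⟩
      · exact Or.inr ⟨rfl, (hpf q2 hq2).2⟩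
    have hqeq : q1 = q2 := by
      apply huniq q1 hq1 q2 hq2 (f k1)
      · rcases hf1 with ⟨_, h⟩ | ⟨_, h⟩ <;> simp [h]
      · rw [heq']; rcases hf2 with ⟨_, h⟩ | ⟨_, h⟩ <;> simp [h]
    subst hqeq
    rcases hf1 with ⟨e1, v1⟩ | ⟨e1, v1⟩ <;> rcases hf2 with ⟨e2, v2⟩ | ⟨e2, v2⟩ <;> omega
  · intro m hm
    rw [Finset.mem_inter, Finset.mem_Ioo, Finset.mem_sdiff] at hm
    obtain ⟨⟨him, hmj⟩, _, hmI⟩ := hm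
    obtain ⟨q, hq, hor⟩ := hcov (i, j) hij m him hmj
    obtain ⟨h1, h2⟩ := key q hq m him hmj hor
    have hcomp := hc q hq
    rcases hor with rfl | rfl
    · rcases hcomp with ⟨h1I, _⟩ | ⟨_, h2I⟩
      · exact absurd h1I hmI
      · exact ⟨q.2, Finset.mem_inter.mpr ⟨h2, h2I⟩, (hpf q hq).2⟩
    · rcases hcomp with ⟨h1I, _⟩ | ⟨_, h2I⟩
      · exact ⟨q.1, Finset.mem_inter.mpr ⟨h1, h1I⟩, (hpf q hq).1⟩
      · exact absurd h2I hmI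
end

section
/- If λ and μ are strict partitions, then sort_1(λ,μ) and sort_2(λ,μ) are strict partitions. -/
/-- A strict partition: a weakly decreasing list of nonnegative integers whose positive parts
are strictly decreasing (trailing zeros allowed). -/
def IsStrictPartition (l : List ℕ) : Prop :=
  l.Chain' fun a b => b ≤ a ∧ (0 < b → b < a)

/-- The sublist of entries in even positions (0-indexed): `(ν_1, ν_3, ν_5, …)` when the list
is `(ν_1, ν_2, ν_3, …)`. -/
def altEven : List ℕ → List ℕ
  | [] => []
  | [a] => [a]
  | a :: _ :: t => a :: altEven t

/-!
Since `λ` and `μ` are strict, every positive value occurs at most twice in the weakly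
decreasing merge `ν = λ ∪ μ`. Taking every other entry of `ν` therefore never picks a positive
value twice in a row: `ν_i = ν_{i+2} > 0` would force `ν_i = ν_{i+1} = ν_{i+2}`, three copies
of the same part.
-/

namespace IsStrictPartition

theorem pairwise {l : List ℕ} (hl : IsStrictPartition l) :
    l.Pairwise fun a b => b ≤ a ∧ (0 < b → b < a) :=
  haveI : IsTrans ℕ fun a b => b ≤ a ∧ (0 < b → b < a) :=
    ⟨fun _ _ _ hxy hyz => ⟨hyz.1.trans hxy.1, fun h => (hyz.2 h).trans_le hxy.1⟩⟩
  List.isChain_iff_pairwise.mp hl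

theorem count_le_one {l : List ℕ} (hl : IsStrictPartition l) {a : ℕ} (ha : 0 < a) :
    l.count a ≤ 1 := by
  by_contra! h
  have hsub : List.Sublist [a, a] l :=
    List.duplicate_iff_sublist.mp (List.duplicate_iff_two_le_count.mpr h)
  exact lt_irrefl a ((List.pairwise_pair.mp (hl.pairwise.sublist hsub)).2 ha)

end IsStrictPartition

theorem head?_altEven : ∀ l : List ℕ, (altEven l).head? = l.head?
  | [] | [_] | _ :: _ :: _ => rfl

theorem isStrictPartition_altEven :
    ∀ {l : List ℕ}, l.Pairwise (· ≥ ·) → (∀ a, 0 < a → l.count a ≤ 2) →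
      IsStrictPartition (altEven l)
  | [], _, _ => List.isChain_nil
  | [_], _, _ => List.isChain_singleton _
  | a :: b :: t, hsorted, hcount => by
    have hcount_t : ∀ x, 0 < x → t.count x ≤ 2 := fun x hx =>
      ((t.sublist_cons_self b).cons a |>.count_le x).trans (hcount x hx)
    refine List.isChain_cons.mpr
      ⟨fun c hc => ?_, isStrictPartition_altEven hsorted.tail.tail hcount_t⟩
    rw [head?_altEven] at hc
    have hct : c ∈ t := List.mem_of_mem_head? hc
    have hba : b ≤ a := List.rel_of_pairwise_cons hsorted List.mem_cons_self
    have hcb : c ≤ b := List.rel_of_pairwise_cons hsorted.tail hct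
    refine ⟨hcb.trans hba, fun hc0 => lt_of_le_of_ne (hcb.trans hba) fun hca => ?_⟩
    have h3 := hcount a (hca ▸ hc0)
    have ht : 0 < t.count a := List.count_pos_iff.mpr (hca ▸ hct)
    simp only [List.count_cons, show b = a by omega, beq_self_eq_true, if_true] at h3
    omega

/-- If `λ` and `μ` are strict partitions, then `sort₁(λ,μ)` and `sort₂(λ,μ)` — the odd- and
even-indexed entries of the weakly decreasing rearrangement `ν = λ ∪ μ` of all parts of `λ`
and `μ` — are strict partitions. -/
theorem strict_sorts (l m : List ℕ) (hl : IsStrictPartition l) (hm : IsStrictPartition m) :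
    IsStrictPartition (altEven (List.insertionSort (· ≥ ·) (l ++ m))) ∧
    IsStrictPartition (altEven (List.insertionSort (· ≥ ·) (l ++ m)).tail) := by
  set ν := List.insertionSort (· ≥ ·) (l ++ m)
  have hsorted : ν.Pairwise (· ≥ ·) := List.pairwise_insertionSort _ _
  have hcount : ∀ a, 0 < a → ν.count a ≤ 2 := fun a ha => by
    rw [(List.perm_insertionSort _ _).count_eq, List.count_append]
    have := hl.count_le_one ha
    have := hm.count_le_one ha
    omega
  exact ⟨isStrictPartition_altEven hsorted hcount,
    isStrictPartition_altEven hsorted.tail fun a ha =>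
      (ν.tail_sublist.count_le a).trans (hcount a ha)⟩
end
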